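/- Let ω > 0 and n ∈ ℕ. For every t ∈ ℝ and every S ∈ [0,1], one has |Γ^cos_n(t; S, ω)| ≤ π²/4. -/
import Mathlib

open Real
open scoped BigOperators

/-- `ReLU(t) = max(0, t)`. -/
noncomputable def relu (t : ℝ) : ℝ := max 0 t

/-- `R₄(t; S, ω) = ReLU(t) + ReLU(t - π/ω) - ReLU(t - πS/ω) - ReLU(t - π(1-S)/ω)`. -/
noncomputable def R4 (ω S t : ℝ) : ℝ :=
  relu t + relu (t - π / ω) - relu (t - π * S / ω) - relu (t - π * (1 - S) / ω)

/-- `Γ^sin(t; S, ω) = (πω/2) sin(πS) [R₄(t; S, ω) - R₄(t - π/ω; S, ω)]`. -/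
noncomputable def gammaSin (ω S t : ℝ) : ℝ :=
  π * ω / 2 * Real.sin (π * S) * (R4 ω S t - R4 ω S (t - π / ω))

/-- `Γ^cos_n(t; S, ω) = Σ_{i=-n-1}^{n} Γ^sin(t - 2πi/ω + π/(2ω); S, ω)`. -/
noncomputable def gammaCos (n : ℕ) (ω S t : ℝ) : ℝ :=
  ∑ i ∈ Finset.Icc (-(n : ℤ) - 1) (n : ℤ),
    gammaSin ω S (t - 2 * π * (i : ℝ) / ω + π / (2 * ω))

lemma relu_sub_le (x a : ℝ) (ha : 0 ≤ a) : relu x - relu (x - a) ≤ a := by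
  unfold relu
  have h1 : max 0 x ≤ max 0 (x - a) + a := by
    apply max_le
    · have := le_max_left 0 (x - a); linarith
    · have := le_max_right 0 (x - a); linarith
  linarith

lemma relu_sub_nonneg (x a : ℝ) (ha : 0 ≤ a) : 0 ≤ relu x - relu (x - a) := by
  unfold relu
  have : max 0 (x - a) ≤ max 0 x := max_le_max le_rfl (by linarith)
  linarith

lemma aux_le (t b c : ℝ) (hb : 0 ≤ b) :
    |relu t + relu (t - (b + c)) - relu (t - b) - relu (t - c)| ≤ b := by
  have hA1 := relu_sub_le t b hb
  have hA2 := relu_sub_nonneg t b hb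
  have hB1 := relu_sub_le (t - c) b hb
  have hB2 := relu_sub_nonneg (t - c) b hb
  have harg : t - c - b = t - (b + c) := by ring
  rw [harg] at hB1 hB2
  rw [abs_le]; constructor <;> linarith

lemma abs_R4_le (ω S : ℝ) (hω : 0 < ω) (hS0 : 0 ≤ S) (hS1 : S ≤ 1) (t : ℝ) :
    |R4 ω S t| ≤ π / (2 * ω) := by
  have hπ := pi_pos
  have hb : 0 ≤ π * S / ω := by positivity
  have hc : 0 ≤ π * (1 - S) / ω := by
    apply div_nonneg _ hω.le; nlinarith
  have hsum : π * S / ω + π * (1 - S) / ω = π / ω := by field_simp; ring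
  rcases le_total S (1/2) with hS | hS
  · have h := aux_le t (π * S / ω) (π * (1 - S) / ω) hb
    rw [hsum] at h
    have hle : π * S / ω ≤ π / (2 * ω) := by
      rw [div_le_div_iff₀ hω (by positivity)]
      nlinarith [mul_nonneg (by linarith : (0:ℝ) ≤ 1/2 - S) (mul_pos hπ hω).le]
    calc |R4 ω S t| ≤ π * S / ω := h
      _ ≤ π / (2 * ω) := hle
  · have h := aux_le t (π * (1 - S) / ω) (π * S / ω) hc
    have hsum' : π * (1 - S) / ω + π * S / ω = π / ω := by rw [add_comm]; exact hsum
    rw [hsum'] at h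
    have heq : R4 ω S t =
        relu t + relu (t - π / ω) - relu (t - π * (1 - S) / ω) - relu (t - π * S / ω) := by
      unfold R4; ring
    rw [heq]
    have hle : π * (1 - S) / ω ≤ π / (2 * ω) := by
      rw [div_le_div_iff₀ hω (by positivity)]
      nlinarith [mul_nonneg (by linarith : (0:ℝ) ≤ S - 1/2) (mul_pos hπ hω).le]
    calc _ ≤ π * (1 - S) / ω := h
      _ ≤ π / (2 * ω) := hle

lemma R4_eq_zero (ω S t : ℝ) (hω : 0 < ω) (hS0 : 0 ≤ S) (hS1 : S ≤ 1)
    (ht : t ≤ 0 ∨ π / ω ≤ t) : R4 ω S t = 0 := by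
  have hπ := pi_pos
  have h1 : 0 ≤ π * S / ω := by positivity
  have h2 : 0 ≤ π * (1 - S) / ω := by
    apply div_nonneg _ hω.le; nlinarith
  have h3 : 0 < π / ω := by positivity
  have hsum : π * S / ω + π * (1 - S) / ω = π / ω := by field_simp; ring
  unfold R4 relu
  rcases ht with ht | ht
  · rw [max_eq_left (by linarith), max_eq_left (by linarith),
      max_eq_left (by linarith), max_eq_left (by linarith)]
    ring
  · rw [max_eq_right (by linarith), max_eq_right (by linarith),
      max_eq_right (by linarith), max_eq_right (by linarith)]
    linarith

lemma gammaSin_eq_zero (ω S t : ℝ) (hω : 0 < ω) (hS0 : 0 ≤ S) (hS1 : S ≤ 1)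
    (ht : t ≤ 0 ∨ 2 * π / ω ≤ t) : gammaSin ω S t = 0 := by
  have hπ := pi_pos
  have h3 : 0 < π / ω := by positivity
  have h2 : 2 * π / ω = π / ω + π / ω := by ring
  unfold gammaSin
  rcases ht with ht | ht
  · rw [R4_eq_zero ω S t hω hS0 hS1 (Or.inl ht),
      R4_eq_zero ω S (t - π / ω) hω hS0 hS1 (Or.inl (by linarith))]
    ring
  · rw [h2] at ht
    rw [R4_eq_zero ω S t hω hS0 hS1 (Or.inr (by linarith)),
      R4_eq_zero ω S (t - π / ω) hω hS0 hS1 (Or.inr (by linarith))]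
    ring

lemma abs_gammaSin_le (ω S t : ℝ) (hω : 0 < ω) (hS0 : 0 ≤ S) (hS1 : S ≤ 1) :
    |gammaSin ω S t| ≤ π ^ 2 / 4 := by
  have hπ := pi_pos
  have hD : |R4 ω S t - R4 ω S (t - π / ω)| ≤ π / (2 * ω) := by
    rcases le_total t (π / ω) with ht | ht
    · rw [R4_eq_zero ω S (t - π / ω) hω hS0 hS1 (Or.inl (by linarith)), sub_zero]
      exact abs_R4_le ω S hω hS0 hS1 t
    · rw [R4_eq_zero ω S t hω hS0 hS1 (Or.inr ht), zero_sub, abs_neg]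
      exact abs_R4_le ω S hω hS0 hS1 (t - π / ω)
  have hC : |π * ω / 2 * Real.sin (π * S)| ≤ π * ω / 2 := by
    rw [abs_mul, abs_of_pos (by positivity : (0:ℝ) < π * ω / 2)]
    have := mul_le_mul_of_nonneg_left (abs_sin_le_one (π * S))
      (by positivity : (0:ℝ) ≤ π * ω / 2)
    linarith
  unfold gammaSin
  rw [abs_mul]
  calc |π * ω / 2 * Real.sin (π * S)| * |R4 ω S t - R4 ω S (t - π / ω)|
      ≤ (π * ω / 2) * (π / (2 * ω)) := by
        apply mul_le_mul hC hD (abs_nonneg _) (by positivity)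
    _ = π ^ 2 / 4 := by field_simp; ring

/-- **Almost sure boundedness of the random ReLU estimator.** For every `t ∈ ℝ` and
`S ∈ [0,1]`, `|Γ^cos_n(t; S, ω)| ≤ π²/4`. -/
theorem gammaCos_bounded (ω : ℝ) (hω : 0 < ω) (n : ℕ) (t S : ℝ)
    (hS : S ∈ Set.Icc (0 : ℝ) 1) :
    |gammaCos n ω S t| ≤ π ^ 2 / 4 := by
  obtain ⟨hS0, hS1⟩ := hS
  have hπ := pi_pos
  set u := t + π / (2 * ω) with hu
  set i₀ : ℤ := ⌊ω * u / (2 * π)⌋ with hi₀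
  have hzero : ∀ i : ℤ, i ≠ i₀ →
      gammaSin ω S (t - 2 * π * (i : ℝ) / ω + π / (2 * ω)) = 0 := by
    intro i hi
    have hexp : (t - 2 * π * (i : ℝ) / ω + π / (2 * ω)) * ω = ω * u - 2 * π * i := by
      rw [hu]; field_simp; ring
    apply gammaSin_eq_zero ω S _ hω hS0 hS1
    rcases lt_or_gt_of_ne hi with hlt | hgt
    · right
      have h1 : i + 1 ≤ i₀ := hlt
      have h2 : ((i : ℝ) + 1) ≤ ω * u / (2 * π) := by
        have := Int.le_floor.mp h1
        push_cast at this
        linarith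
      have h3 : ((i : ℝ) + 1) * (2 * π) ≤ ω * u := by
        rwa [← le_div_iff₀ (by positivity)]
      rw [div_le_iff₀ hω, hexp]
      linarith
    · left
      have h1 : i₀ < i := hgt
      have h2 : ω * u / (2 * π) < (i : ℝ) := by
        have := Int.floor_lt.mp h1
        exact_mod_cast this
      have h3 : ω * u < (i : ℝ) * (2 * π) := by
        rwa [div_lt_iff₀ (by positivity)] at h2
      have h4 : (t - 2 * π * (i : ℝ) / ω + π / (2 * ω)) * ω < 0 := by
        rw [hexp]; linarith
      nlinarith
  unfold gammaCos
  by_cases hmem : i₀ ∈ Finset.Icc (-(n : ℤ) - 1) (n : ℤ)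
  · rw [Finset.sum_eq_single_of_mem i₀ hmem (fun b _ hb => hzero b hb)]
    exact abs_gammaSin_le ω S _ hω hS0 hS1
  · rw [Finset.sum_eq_zero (fun b hb => hzero b (fun h => hmem (h ▸ hb)))]
    simp [abs_nonneg]
    positivity
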